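/- The function λ(x) = [(1-x)·log(1-x) + (1+x)·log(1+x)]/x² is strictly increasing on (0,1). -/

import Mathlib

/-! With `Φ x = (1 - x) log (1 - x) + (1 + x) log (1 + x)` one has `Φ' = log (1 + x) - log (1 - x)`
and `Φ'' = 2 / (1 - x²)`, so `(Φ / x²)' = g / x³` with `g = x Φ' - 2 Φ`. Now `g 0 = 0` and
`g' = x Φ'' - Φ'`, which again vanishes at `0` and has derivative `x Φ''' = 4x² / (1 - x²)² > 0`.
Two applications of "vanishes at `0` and increases" give `g > 0` on `(0, 1)`. -/

open Real Set

lemma strictMonoOn_of_hasDerivAt_pos' {D : Set ℝ} (hD : Convex ℝ D) {f f' : ℝ → ℝ}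
    (hf : ∀ x ∈ D, HasDerivAt f (f' x) x) (hf' : ∀ x ∈ interior D, 0 < f' x) :
    StrictMonoOn f D :=
  strictMonoOn_of_hasDerivWithinAt_pos hD
    (fun x hx ↦ (hf x hx).continuousAt.continuousWithinAt)
    (fun x hx ↦ (hf x (interior_subset hx)).hasDerivWithinAt) hf'

lemma pos_of_hasDerivAt_pos_of_eq_zero {f f' : ℝ → ℝ} {a b : ℝ} (ha : f a = 0)
    (hf : ∀ x ∈ Ico a b, HasDerivAt f (f' x) x) (hf' : ∀ x ∈ Ioo a b, 0 < f' x)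
    {x : ℝ} (hx : x ∈ Ioo a b) : 0 < f x := by
  have hmono := strictMonoOn_of_hasDerivAt_pos' (convex_Ico a b) hf (by rwa [interior_Ico])
  simpa [ha] using hmono (left_mem_Ico.2 (hx.1.trans hx.2)) (Ioo_subset_Ico_self hx) hx.1

lemma HasDerivAt.div_sq {f : ℝ → ℝ} {f' x : ℝ} (hf : HasDerivAt f f' x) (hx : x ≠ 0) :
    HasDerivAt (fun y ↦ f y / y ^ 2) ((x * f' - 2 * f x) / x ^ 3) x :=
  (hf.div (hasDerivAt_pow 2 x) (pow_ne_zero 2 hx)).congr_deriv (by field_simp; ring)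

noncomputable def symMulLog (x : ℝ) : ℝ := (1 - x) * log (1 - x) + (1 + x) * log (1 + x)

noncomputable def logRatio (x : ℝ) : ℝ := log (1 + x) - log (1 - x)

/-- `x³ (Φ / x²)'`, the `g` of the header. -/
noncomputable def quotDerivNum (x : ℝ) : ℝ := x * logRatio x - 2 * symMulLog x

noncomputable def quotDerivNumDeriv (x : ℝ) : ℝ := 2 * x / (1 - x ^ 2) - logRatio x

lemma hasDerivAt_log_one_add {x : ℝ} (hx : 1 + x ≠ 0) :
    HasDerivAt (fun y ↦ log (1 + y)) (1 / (1 + x)) x :=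
  ((hasDerivAt_id' x).const_add 1).log hx

lemma hasDerivAt_log_one_sub {x : ℝ} (hx : 1 - x ≠ 0) :
    HasDerivAt (fun y ↦ log (1 - y)) (-1 / (1 - x)) x :=
  ((hasDerivAt_id' x).const_sub 1).log hx

section Derivatives

variable {x : ℝ} (hx₁ : 1 + x ≠ 0) (hx₂ : 1 - x ≠ 0)
include hx₁ hx₂

lemma hasDerivAt_logRatio : HasDerivAt logRatio (2 / (1 - x ^ 2)) x := by
  have h : 1 - x ^ 2 = (1 + x) * (1 - x) := by ring
  refine ((hasDerivAt_log_one_add hx₁).sub (hasDerivAt_log_one_sub hx₂)).congr_deriv ?_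
  rw [h]
  field_simp
  ring

lemma hasDerivAt_symMulLog : HasDerivAt symMulLog (logRatio x) x := by
  refine (((hasDerivAt_id' x).const_sub 1).mul (hasDerivAt_log_one_sub hx₂)).add
    (((hasDerivAt_id' x).const_add 1).mul (hasDerivAt_log_one_add hx₁)) |>.congr_deriv ?_
  rw [logRatio]
  field_simp
  ring

lemma hasDerivAt_quotDerivNum : HasDerivAt quotDerivNum (quotDerivNumDeriv x) x := by
  refine ((hasDerivAt_id' x).mul (hasDerivAt_logRatio hx₁ hx₂)).sub
    ((hasDerivAt_symMulLog hx₁ hx₂).const_mul 2) |>.congr_deriv ?_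
  rw [quotDerivNumDeriv]
  ring

lemma hasDerivAt_quotDerivNumDeriv :
    HasDerivAt quotDerivNumDeriv (4 * x ^ 2 / (1 - x ^ 2) ^ 2) x := by
  have h : 1 - x ^ 2 = (1 + x) * (1 - x) := by ring
  refine (((hasDerivAt_id' x).const_mul 2).div ((hasDerivAt_pow 2 x).const_sub 1)
    (h ▸ mul_ne_zero hx₁ hx₂)).sub (hasDerivAt_logRatio hx₁ hx₂) |>.congr_deriv ?_
  rw [h]
  field_simp
  ring

end Derivatives

lemma quotDerivNumDeriv_pos {x : ℝ} (hx : x ∈ Ioo 0 1) : 0 < quotDerivNumDeriv x := by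
  refine pos_of_hasDerivAt_pos_of_eq_zero (f' := fun y ↦ 4 * y ^ 2 / (1 - y ^ 2) ^ 2)
    (by simp [quotDerivNumDeriv, logRatio]) (fun y hy ↦ ?_) (fun y hy ↦ ?_) hx
  · exact hasDerivAt_quotDerivNumDeriv (by linarith [hy.1]) (by linarith [hy.2])
  · have : 0 < 1 - y ^ 2 := by nlinarith [hy.1, hy.2]
    have : 0 < y := hy.1
    positivity

lemma quotDerivNum_pos {x : ℝ} (hx : x ∈ Ioo 0 1) : 0 < quotDerivNum x := by
  refine pos_of_hasDerivAt_pos_of_eq_zero (by simp [quotDerivNum, logRatio, symMulLog])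
    (fun y hy ↦ ?_) (fun y hy ↦ quotDerivNumDeriv_pos hy) hx
  exact hasDerivAt_quotDerivNum (by linarith [hy.1]) (by linarith [hy.2])

theorem stmt2 :
    StrictMonoOn (fun x : ℝ => ((1 - x) * Real.log (1 - x) + (1 + x) * Real.log (1 + x)) / x^2)
      (Set.Ioo 0 1) := by
  refine strictMonoOn_of_hasDerivAt_pos' (f' := fun x ↦ quotDerivNum x / x ^ 3) (convex_Ioo 0 1)
    (fun x hx ↦ ?_) (fun x hx ↦ ?_)
  · exact (hasDerivAt_symMulLog (by linarith [hx.1]) (by linarith [hx.2])).div_sq hx.1.ne'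
  · rw [interior_Ioo] at hx
    have := quotDerivNum_pos hx
    have : 0 < x := hx.1
    positivity
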